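/- Let R be a ring, A a right ideal of R with a serial factorization A = A_1⋯A_n, and B a right ideal of R containing A. Then B has a serial factorization if and only if either B ⊇ A_i for some index i = 1, …, n or B is a two-sided ideal of R. -/

import Mathlib

open MulOpposite

universe u

/-- The product `A·B` of two right ideals of `R` (right ideals are `Rᵐᵒᵖ`-submodules of `R`):
the set of all finite sums of products `a * b` with `a ∈ A`, `b ∈ B`. -/
def rmul {R : Type u} [Ring R] (A B : Submodule Rᵐᵒᵖ R) : Submodule Rᵐᵒᵖ R :=
  Submodule.span Rᵐᵒᵖ {x : R | ∃ a ∈ A, ∃ b ∈ B, x = a * b}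

/-- The product `A₁⋯Aₙ` of a (possibly empty) list of right ideals. -/
def rprod {R : Type u} [Ring R] : List (Submodule Rᵐᵒᵖ R) → Submodule Rᵐᵒᵖ R
  | [] => ⊤
  | [A] => A
  | A :: l => rmul A (rprod l)

/-- A finite family of right ideals is coindependent if `Aᵢ + ⋂_{j ≠ i} Aⱼ = R` for every `i`. -/
def Coindep {R : Type u} [Ring R] {n : ℕ} (A : Fin n → Submodule Rᵐᵒᵖ R) : Prop :=
  ∀ i, A i ⊔ (⨅ j, ⨅ (_ : j ≠ i), A j) = ⊤

/-- A module is uniserial if its submodules are linearly ordered by inclusion. -/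
def IsUniserialMod (S : Type*) [Ring S] (M : Type*) [AddCommGroup M] [Module S M] : Prop :=
  ∀ N P : Submodule S M, N ≤ P ∨ P ≤ N

/-- A right ideal is a two-sided ideal if it is also closed under left multiplication. -/
def IsTwoSidedRid {R : Type u} [Ring R] (A : Submodule Rᵐᵒᵖ R) : Prop :=
  ∀ (r : R), ∀ x ∈ A, r * x ∈ A

/-- A serial factorization of a right ideal `A`: a factorization `A = A₁⋯Aₙ` into proper
right ideals that pairwise commute, form a coindependent family, and are such that every
quotient `R/Aᵢ` is a uniserial right `R`-module. -/
def IsSerialFact {R : Type u} [Ring R] {n : ℕ} (A : Submodule Rᵐᵒᵖ R)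
    (F : Fin n → Submodule Rᵐᵒᵖ R) : Prop :=
  (∀ i, F i ≠ ⊤) ∧ (∀ i j, rmul (F i) (F j) = rmul (F j) (F i)) ∧ Coindep F ∧
    (∀ i, IsUniserialMod Rᵐᵒᵖ (R ⧸ F i)) ∧ A = rprod (List.ofFn F)

/-- A right ideal has a serial factorization if it admits one of some length. -/
def HasSerialFact {R : Type u} [Ring R] (A : Submodule Rᵐᵒᵖ R) : Prop :=
  ∃ (n : ℕ) (F : Fin n → Submodule Rᵐᵒᵖ R), IsSerialFact A F

/-- A right chain ring: its right ideals are linearly ordered by inclusion. -/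
def IsRightChainRing (R : Type u) [Ring R] : Prop :=
  ∀ A B : Submodule Rᵐᵒᵖ R, A ≤ B ∨ B ≤ A

/-- A ring is right duo if every right ideal is a two-sided ideal. -/
def IsRightDuo (R : Type u) [Ring R] : Prop :=
  ∀ A : Submodule Rᵐᵒᵖ R, IsTwoSidedRid A

/-- The principal right ideal `rR`. -/
def rspan {R : Type u} [Ring R] (r : R) : Submodule Rᵐᵒᵖ R :=
  Submodule.span Rᵐᵒᵖ ({r} : Set R)

/-!
For a pairwise commuting coindependent family of right ideals the product equals the intersection
(the Chinese remainder argument), so `A = ⋂ Aᵢ` and `B = ⋂ Bⱼ`. If `Aᵢ ⊆ B`, then `R/B` is uniserial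
and `B` is its own serial factorization. If `B` is two-sided, the proper right ideals among the
`B + Aᵢ` form a serial factorization of `B`: two-sidedness gives `(B + X)(B + Y) = B + XY` for
comaximal commuting `X, Y`, so they still commute, and their product is `B + A = B`.

Conversely, let `B = B₁⋯Bₘ` be serial with no `Aᵢ ⊆ B`, and put `Eᵢ = ⋂_{k ≠ i} Aₖ`.
Coindependence and modularity give `∑ Eᵢ = R`; as the right ideals `Eᵢ + Bⱼ` form a chain,
`Eᵢ + Bⱼ = R` for some `i`. Writing `1 = e + g` with `e ∈ Eᵢ`, `g ∈ Bⱼ`, the uniseriality of `R/Aᵢ`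
makes `Bⱼ` two-sided unless `Aᵢ ⊆ Bⱼ`. Distinct factors are comaximal, so they cannot contain the
same `Aᵢ`; hence in the remaining case every `Bₗ` with `l ≠ j` either contains `Eᵢ` or is
two-sided, `Eᵢ` maps `⋂_{l ≠ j} Bₗ` into itself, and `B ⊆ (⋂_{l ≠ j} Bₗ)·Bⱼ` gives `Eᵢ·B ⊆ Bⱼ`.
Then `R·B ⊆ Eᵢ·B + g·R ⊆ Bⱼ` for every `j`.
-/

section Uniserial

variable {S M : Type*} [Ring S] [AddCommGroup M] [Module S M]

theorem isUniserialMod_quotient_iff {N : Submodule S M} :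
    IsUniserialMod S (M ⧸ N) ↔ ∀ P Q : Submodule S M, N ≤ P → N ≤ Q → P ≤ Q ∨ Q ≤ P := by
  let e := Submodule.comapMkQRelIso N
  constructor
  · intro hu P Q hP hQ
    exact (hu (e.symm ⟨P, hP⟩) (e.symm ⟨Q, hQ⟩)).imp e.symm.le_iff_le.1 e.symm.le_iff_le.1
  · intro h P Q
    exact (h _ _ (e P).2 (e Q).2).imp e.le_iff_le.1 e.le_iff_le.1

theorem IsUniserialMod.le_total_of_le {N P Q : Submodule S M} (hu : IsUniserialMod S (M ⧸ N))
    (hP : N ≤ P) (hQ : N ≤ Q) : P ≤ Q ∨ Q ≤ P :=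
  isUniserialMod_quotient_iff.1 hu P Q hP hQ

theorem IsUniserialMod.quotient_of_le {N N' : Submodule S M} (hu : IsUniserialMod S (M ⧸ N))
    (h : N ≤ N') : IsUniserialMod S (M ⧸ N') :=
  isUniserialMod_quotient_iff.2 fun _ _ hP hQ => hu.le_total_of_le (h.trans hP) (h.trans hQ)

end Uniserial

variable {R : Type u} [Ring R]

section Products

theorem mul_mem_of_mem_rightIdeal {A : Submodule Rᵐᵒᵖ R} {a : R} (ha : a ∈ A) (r : R) :
    a * r ∈ A := by
  simpa using A.smul_mem (op r) ha

theorem mul_mem_rmul {A B : Submodule Rᵐᵒᵖ R} {a b : R} (ha : a ∈ A) (hb : b ∈ B) :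
    a * b ∈ rmul A B :=
  Submodule.subset_span ⟨a, ha, b, hb, rfl⟩

theorem rmul_le_iff {A B C : Submodule Rᵐᵒᵖ R} :
    rmul A B ≤ C ↔ ∀ a ∈ A, ∀ b ∈ B, a * b ∈ C := by
  refine ⟨fun h a ha b hb => h (mul_mem_rmul ha hb), fun h => Submodule.span_le.2 ?_⟩
  rintro _ ⟨a, ha, b, hb, rfl⟩
  exact h a ha b hb

theorem rmul_induction_on {A B : Submodule Rᵐᵒᵖ R} {p : R → Prop} {x : R} (hx : x ∈ rmul A B)
    (mul : ∀ a ∈ A, ∀ b ∈ B, p (a * b)) (add : ∀ x y, p x → p y → p (x + y)) : p x := by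
  suffices ∀ t, p (x * t) by simpa using this 1
  induction hx using Submodule.span_induction with
  | mem _ h =>
    obtain ⟨a, ha, b, hb, rfl⟩ := h
    exact fun t => mul_assoc a b t ▸ mul a ha _ (mul_mem_of_mem_rightIdeal hb t)
  | zero => simpa using mul 0 A.zero_mem 0 B.zero_mem
  | add _ _ _ _ hx hy => exact fun t => (add_mul _ _ t).symm ▸ add _ _ (hx t) (hy t)
  | smul r _ _ hx => exact fun t => by simpa [mul_assoc] using hx (unop r * t)

theorem rmul_mono {A A' B B' : Submodule Rᵐᵒᵖ R} (hA : A ≤ A') (hB : B ≤ B') :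
    rmul A B ≤ rmul A' B' :=
  rmul_le_iff.2 fun _ ha _ hb => mul_mem_rmul (hA ha) (hB hb)

theorem rmul_le_left {A B : Submodule Rᵐᵒᵖ R} : rmul A B ≤ A :=
  rmul_le_iff.2 fun _ ha b _ => mul_mem_of_mem_rightIdeal ha b

theorem rmul_le_right_of_comm {A B : Submodule Rᵐᵒᵖ R} (h : rmul A B = rmul B A) :
    rmul A B ≤ B :=
  h ▸ rmul_le_left

theorem rmul_top (A : Submodule Rᵐᵒᵖ R) : rmul A ⊤ = A :=
  le_antisymm rmul_le_left fun x hx => by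
    simpa using mul_mem_rmul hx (Submodule.mem_top (x := (1 : R)))

theorem le_top_rmul (A : Submodule Rᵐᵒᵖ R) : A ≤ rmul ⊤ A :=
  fun x hx => by simpa using mul_mem_rmul (Submodule.mem_top (x := (1 : R))) hx

theorem rmul_assoc (A B C : Submodule Rᵐᵒᵖ R) : rmul (rmul A B) C = rmul A (rmul B C) := by
  apply le_antisymm
  · refine rmul_le_iff.2 fun x hx c hc => ?_
    refine rmul_induction_on (p := fun y => y * c ∈ rmul A (rmul B C)) hx
      (fun a ha b hb => ?_) fun y z hy hz => ?_
    · simpa [mul_assoc] using mul_mem_rmul ha (mul_mem_rmul hb hc)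
    · simpa [add_mul] using add_mem hy hz
  · refine rmul_le_iff.2 fun a ha x hx => ?_
    have : rmul B C ≤ (rmul (rmul A B) C).comap (DistribSMul.toLinearMap Rᵐᵒᵖ R a) :=
      rmul_le_iff.2 fun b hb c hc => by
        simpa [mul_assoc] using mul_mem_rmul (mul_mem_rmul ha hb) hc
    simpa using this hx

theorem rprod_cons (A : Submodule Rᵐᵒᵖ R) (l : List (Submodule Rᵐᵒᵖ R)) :
    rprod (A :: l) = rmul A (rprod l) := by
  cases l
  · exact (rmul_top A).symm
  · rfl

end Products

section Commuting

theorem rmul_rprod_comm {X : Submodule Rᵐᵒᵖ R} :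
    ∀ {l : List (Submodule Rᵐᵒᵖ R)}, l ≠ [] → (∀ Y ∈ l, rmul X Y = rmul Y X) →
      rmul X (rprod l) = rmul (rprod l) X
  | [Y], _, hX => hX Y List.mem_cons_self
  | Y :: Z :: l, _, hX => by
    rw [rprod_cons, ← rmul_assoc, hX Y List.mem_cons_self, rmul_assoc,
      rmul_rprod_comm (List.cons_ne_nil Z l) fun W hW => hX W (List.mem_cons_of_mem Y hW),
      ← rmul_assoc]

theorem rmul_rprod_le {X : Submodule Rᵐᵒᵖ R} {l : List (Submodule Rᵐᵒᵖ R)}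
    (hX : ∀ Y ∈ l, rmul X Y = rmul Y X) : rmul X (rprod l) ≤ rmul (rprod l) X := by
  rcases eq_or_ne l [] with rfl | hl
  · exact (rmul_top X).trans_le (le_top_rmul X)
  · exact (rmul_rprod_comm hl hX).le

variable {n : ℕ}

theorem rprod_ofFn_succ (H : Fin (n + 1) → Submodule Rᵐᵒᵖ R) :
    rprod (List.ofFn H) = rmul (H 0) (rprod (List.ofFn fun i => H i.succ)) := by
  rw [List.ofFn_succ, rprod_cons]

theorem rprod_ofFn_le : ∀ {n : ℕ} {H : Fin n → Submodule Rᵐᵒᵖ R},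
    (∀ i j, rmul (H i) (H j) = rmul (H j) (H i)) → ∀ i, rprod (List.ofFn H) ≤ H i
  | 0, _, _, i => i.elim0
  | _ + 1, H, hcomm, i => by
    rw [rprod_ofFn_succ]
    induction i using Fin.cases with
    | zero => exact rmul_le_left
    | succ i =>
      exact (rmul_mono le_rfl (rprod_ofFn_le (fun _ _ => hcomm _ _) i)).trans
        (rmul_le_right_of_comm (hcomm 0 i.succ))

theorem Coindep.comp_injective {m : ℕ} {H : Fin n → Submodule Rᵐᵒᵖ R} (hco : Coindep H)
    {f : Fin m → Fin n} (hf : Function.Injective f) : Coindep fun k => H (f k) := by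
  intro k
  refine eq_top_iff.2 ((hco (f k)).ge.trans (sup_le_sup_left ?_ _))
  exact le_iInf₂ fun k' hk' => iInf₂_le (f := fun j (_ : j ≠ f k) => H j) (f k') (hf.ne hk')

theorem Coindep.mono {H H' : Fin n → Submodule Rᵐᵒᵖ R} (hco : Coindep H) (h : ∀ i, H i ≤ H' i) :
    Coindep H' := fun i =>
  eq_top_iff.2 <| (hco i).ge.trans <| sup_le_sup (h i) (iInf₂_mono fun j _ => h j)

theorem Coindep.sup_eq_top {H : Fin n → Submodule Rᵐᵒᵖ R} (hco : Coindep H) {i j : Fin n}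
    (hij : i ≠ j) : H i ⊔ H j = ⊤ :=
  eq_top_iff.2 <| (hco i).ge.trans <| sup_le_sup_left (iInf₂_le j hij.symm) _

theorem iInf_le_rprod_ofFn : ∀ {n : ℕ} {H : Fin n → Submodule Rᵐᵒᵖ R},
    (∀ i j, rmul (H i) (H j) = rmul (H j) (H i)) → Coindep H → ⨅ i, H i ≤ rprod (List.ofFn H)
  | 0, _, _, _ => by simp [rprod]
  | k + 1, H, hcomm, hco => by
    let T := List.ofFn fun i : Fin k => H i.succ
    have hT : ⨅ j, ⨅ _ : j ≠ 0, H j ≤ rprod T := by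
      have ih : ⨅ i : Fin k, H i.succ ≤ rprod T := iInf_le_rprod_ofFn (fun _ _ => hcomm _ _)
        (hco.comp_injective (Fin.succ_injective _))
      have h0 : ⨅ j, ⨅ _ : j ≠ 0, H j ≤ ⨅ i : Fin k, H i.succ :=
        le_iInf fun i => iInf₂_le (f := fun j (_ : j ≠ 0) => H j) i.succ i.succ_ne_zero
      exact h0.trans ih
    rw [rprod_ofFn_succ]
    rcases eq_or_ne T [] with hT0 | hT0
    · change ⨅ i, H i ≤ rmul (H 0) (rprod T)
      rw [hT0, rprod, rmul_top]
      exact iInf_le H 0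
    have hcommT : rmul (H 0) (rprod T) = rmul (rprod T) (H 0) := by
      refine rmul_rprod_comm hT0 fun Y hY => ?_
      obtain ⟨i, rfl⟩ := List.mem_ofFn.1 hY
      exact hcomm 0 i.succ
    intro x hx
    obtain ⟨f, hf, y, hy, hfy⟩ := Submodule.mem_sup.1 ((hco 0).ge (Submodule.mem_top (x := 1)))
    have hx0 : x ∈ H 0 := iInf_le H 0 hx
    have hxT : x ∈ rprod T := hT ((le_iInf₂ fun j _ => iInf_le H j) hx)
    rw [← one_mul x, ← hfy, add_mul]
    exact add_mem (mul_mem_rmul hf hxT) (hcommT ▸ mul_mem_rmul (hT hy) hx0)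

theorem rprod_ofFn_eq_iInf {H : Fin n → Submodule Rᵐᵒᵖ R}
    (hcomm : ∀ i j, rmul (H i) (H j) = rmul (H j) (H i)) (hco : Coindep H) :
    rprod (List.ofFn H) = ⨅ i, H i :=
  le_antisymm (le_iInf (rprod_ofFn_le hcomm)) (iInf_le_rprod_ofFn hcomm hco)

theorem rprod_ofFn_le_rmul_iInf_ne : ∀ {n : ℕ} {H : Fin n → Submodule Rᵐᵒᵖ R},
    (∀ i j, rmul (H i) (H j) = rmul (H j) (H i)) → ∀ j,
      rprod (List.ofFn H) ≤ rmul (⨅ l, ⨅ _ : l ≠ j, H l) (H j)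
  | 0, _, _, j => j.elim0
  | k + 1, H, hcomm, j => by
    have hcommT : ∀ i j : Fin k, rmul (H i.succ) (H j.succ) = rmul (H j.succ) (H i.succ) :=
      fun _ _ => hcomm _ _
    rw [rprod_ofFn_succ]
    induction j using Fin.cases with
    | zero =>
      refine (rmul_rprod_le fun Y hY => ?_).trans (rmul_mono ?_ le_rfl)
      · obtain ⟨i, rfl⟩ := List.mem_ofFn.1 hY
        exact hcomm 0 i.succ
      · refine le_iInf₂ fun l hl => ?_
        obtain ⟨i, rfl⟩ := Fin.exists_succ_eq.2 hl
        exact rprod_ofFn_le hcommT i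
    | succ j =>
      refine (rmul_mono le_rfl (rprod_ofFn_le_rmul_iInf_ne hcommT j)).trans ?_
      rw [← rmul_assoc]
      refine rmul_mono (le_iInf₂ fun l hl => ?_) le_rfl
      induction l using Fin.cases with
      | zero => exact rmul_le_left
      | succ l =>
        exact (rmul_mono le_rfl (iInf₂_le (f := fun i (_ : i ≠ j) => H i.succ) l
          (ne_of_apply_ne Fin.succ hl))).trans (rmul_le_right_of_comm (hcomm 0 l.succ))

end Commuting

theorem mul_mem_of_mem_rprod_ofFn {m : ℕ} {G : Fin m → Submodule Rᵐᵒᵖ R}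
    (hcomm : ∀ i j, rmul (G i) (G j) = rmul (G j) (G i)) {j l : Fin m} (hlj : l ≠ j) {y : R}
    (hy : ∀ k ≠ j, ∀ z ∈ G k, y * z ∈ G k) {x : R} (hx : x ∈ rprod (List.ofFn G)) :
    y * x ∈ G j := by
  have key : rmul (⨅ k, ⨅ _ : k ≠ j, G k) (G j) ≤
      (G j).comap (DistribSMul.toLinearMap Rᵐᵒᵖ R y) := by
    refine rmul_le_iff.2 fun c hc g hg => ?_
    have hyc : y * c ∈ G l := hy l hlj c (iInf₂_le (f := fun k (_ : k ≠ j) => G k) l hlj hc)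
    simpa [mul_assoc] using rmul_le_right_of_comm (hcomm l j) (mul_mem_rmul hyc hg)
  simpa using key (rprod_ofFn_le_rmul_iInf_ne hcomm j hx)

section TwoSided

variable {B : Submodule Rᵐᵒᵖ R}

theorem rmul_sup_sup_le (hB : IsTwoSidedRid B) (X Y : Submodule Rᵐᵒᵖ R) :
    rmul (B ⊔ X) (B ⊔ Y) ≤ B ⊔ rmul X Y := by
  refine rmul_le_iff.2 fun u hu v hv => ?_
  obtain ⟨b, hb, x, hx, rfl⟩ := Submodule.mem_sup.1 hu
  obtain ⟨b', hb', y, hy, rfl⟩ := Submodule.mem_sup.1 hv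
  rw [add_mul, mul_add x, ← add_assoc]
  exact add_mem (Submodule.mem_sup_left (add_mem (mul_mem_of_mem_rightIdeal hb _) (hB x b' hb')))
    (Submodule.mem_sup_right (mul_mem_rmul hx hy))

theorem rmul_sup_sup_eq (hB : IsTwoSidedRid B) {X Y : Submodule Rᵐᵒᵖ R} (hXY : X ⊔ Y = ⊤)
    (hcomm : rmul X Y = rmul Y X) : rmul (B ⊔ X) (B ⊔ Y) = B ⊔ rmul X Y := by
  refine le_antisymm (rmul_sup_sup_le hB X Y)
    (sup_le (fun b hb => ?_) (rmul_mono le_sup_right le_sup_right))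
  obtain ⟨x, hx, y, hy, hxy⟩ := Submodule.mem_sup.1 (hXY.ge (Submodule.mem_top (x := (1 : R))))
  have hyb : y * b ∈ B := hB y b hb
  have hybx : y * b * x ∈ rmul (B ⊔ X) (B ⊔ Y) :=
    rmul_mono le_sup_right le_sup_right (hcomm ▸ mul_mem_rmul (mul_mem_of_mem_rightIdeal hy b) hx)
  have hyby : y * b * y ∈ rmul (B ⊔ X) (B ⊔ Y) :=
    mul_mem_rmul (Submodule.mem_sup_left hyb) (Submodule.mem_sup_right hy)
  have hxb : x * b ∈ rmul (B ⊔ X) (B ⊔ Y) :=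
    mul_mem_rmul (Submodule.mem_sup_right hx) (Submodule.mem_sup_left hb)
  have hb_eq : b = x * b + (y * b * x + y * b * y) := by
    rw [← mul_add, hxy, mul_one, ← add_mul, hxy, one_mul]
  rw [hb_eq]
  exact add_mem hxb (add_mem hybx hyby)

theorem rprod_map_sup_le (hB : IsTwoSidedRid B) :
    ∀ l : List (Submodule Rᵐᵒᵖ R), rprod (l.map (B ⊔ ·)) ≤ B ⊔ rprod l
  | [] => le_sup_right
  | X :: l => by
    rw [List.map_cons, rprod_cons, rprod_cons]
    exact (rmul_mono le_rfl (rprod_map_sup_le hB l)).trans (rmul_sup_sup_le hB X _)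

end TwoSided

theorem iSup_iInf_ne_eq_top {α ι : Type*} [CompleteLattice α] [IsModularLattice α] [Fintype ι]
    [Nonempty ι] {F : ι → α} (hF : ∀ i, F i ⊔ ⨅ j, ⨅ _ : j ≠ i, F j = ⊤) :
    ⨆ i, ⨅ j, ⨅ _ : j ≠ i, F j = ⊤ := by
  classical
  set E := fun i => ⨅ j, ⨅ _ : j ≠ i, F j
  suffices h : ∀ t : Finset ι, ⨅ j ∈ tᶜ, F j ≤ ⨆ i, E i by
    simpa using h Finset.univ
  intro t
  induction t using Finset.induction_on with
  | empty =>
    obtain ⟨i⟩ := ‹Nonempty ι›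
    simpa using (le_iInf₂ fun j _ => iInf_le F j).trans (le_iSup E i)
  | insert a t ha ih =>
    have haE : E a ≤ ⨅ j ∈ (insert a t)ᶜ, F j :=
      le_iInf₂ fun j hj => iInf₂_le j (by rintro rfl; simp at hj)
    have hsplit : ⨅ j ∈ tᶜ, F j = F a ⊓ ⨅ j ∈ (insert a t)ᶜ, F j := by
      rw [Finset.compl_insert, ← Finset.iInf_insert, Finset.insert_erase (by simpa using ha)]
    calc ⨅ j ∈ (insert a t)ᶜ, F j = (E a ⊔ F a) ⊓ ⨅ j ∈ (insert a t)ᶜ, F j := by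
          rw [sup_comm, hF a, top_inf_eq]
      _ = E a ⊔ (⨅ j ∈ tᶜ, F j) := by rw [sup_inf_assoc_of_le _ haE, hsplit]
      _ ≤ ⨆ i, E i := sup_le (le_iSup E a) ih

theorem mem_rspan_self {a : R} : a ∈ rspan a :=
  Submodule.mem_span_singleton_self a

theorem mul_mem_rspan (a t : R) : a * t ∈ rspan a :=
  mul_mem_of_mem_rightIdeal (Submodule.mem_span_singleton_self a) t

theorem mem_sup_rspan {F : Submodule Rᵐᵒᵖ R} {a x : R} :
    x ∈ F ⊔ rspan a ↔ ∃ f ∈ F, ∃ t, f + a * t = x := by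
  simp only [Submodule.mem_sup, rspan, Submodule.mem_span_singleton, MulOpposite.exists,
    op_smul_eq_mul]
  constructor
  · rintro ⟨f, hf, _, ⟨t, rfl⟩, rfl⟩
    exact ⟨f, hf, t, rfl⟩
  · rintro ⟨f, hf, t, rfl⟩
    exact ⟨f, hf, _, ⟨t, rfl⟩, rfl⟩

-- In the main argument `E = ⋂_{k ≠ i} Aₖ`, `F = Aᵢ` and `G` is a factor `Bⱼ` of `B`.
section Comaximal

variable {E F G : Submodule Rᵐᵒᵖ R} {e g : R}

theorem notMem_sup_inf_of_not_le (hEF : ∀ y ∈ E, ∀ f ∈ F, y * f ∈ F) (hEFG : E ⊓ F ≤ G)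
    (he : e ∈ E) (hg : g ∈ G) (heg : e + g = 1) (hFG : ¬F ≤ G) : g ∉ F ⊔ (E ⊓ G) := by
  intro hgm
  obtain ⟨f, hf, w, hw, rfl⟩ := Submodule.mem_sup.1 hgm
  have hfG : f ∈ G := by simpa using sub_mem hg hw.2
  refine hFG fun f' hf' => ?_
  have hdecomp : f' = e * f' + f * f' + w * f' := by
    rw [← add_mul, ← add_mul, add_assoc, heg, one_mul]
  rw [hdecomp]
  exact add_mem (add_mem (hEFG ⟨mul_mem_of_mem_rightIdeal he f', hEF e he f' hf'⟩)
    (mul_mem_of_mem_rightIdeal hfG f')) (mul_mem_of_mem_rightIdeal hw.2 f')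

theorem mul_mem_of_not_le (hEF : ∀ y ∈ E, ∀ f ∈ F, y * f ∈ F) (hEFG : E ⊓ F ≤ G)
    (hus : IsUniserialMod Rᵐᵒᵖ (R ⧸ F)) (he : e ∈ E) (hg : g ∈ G) (heg : e + g = 1)
    (hFG : ¬F ≤ G) {y : R} (hy : y ∈ E) : y * g ∈ G := by
  have hg_notMem := notMem_sup_inf_of_not_le hEF hEFG he hg heg hFG
  obtain rfl : e = 1 - g := eq_sub_of_add_eq heg
  have heg_mem : (1 - g) * g ∈ E ⊓ G :=
    ⟨mul_mem_of_mem_rightIdeal he g,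
      (show g * (1 - g) = (1 - g) * g by noncomm_ring) ▸ mul_mem_of_mem_rightIdeal hg _⟩
  rcases hus.le_total_of_le (le_sup_left : F ≤ F ⊔ rspan (y * g))
    (le_sup_left : F ≤ F ⊔ rspan g) with h | h
  · obtain ⟨f, hf, t, ht⟩ := mem_sup_rspan.1 (h (Submodule.mem_sup_right mem_rspan_self))
    have hyg : y * g = (1 - g) * f + g * ((1 - g) * t) + g * (y * g) := by
      rw [← ht]; noncomm_ring
    rw [hyg]
    exact add_mem (add_mem (hEFG ⟨mul_mem_of_mem_rightIdeal he f, hEF _ he f hf⟩)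
      (mul_mem_of_mem_rightIdeal hg _)) (mul_mem_of_mem_rightIdeal hg _)
  · obtain ⟨f, hf, s, hs⟩ := mem_sup_rspan.1 (h (Submodule.mem_sup_right mem_rspan_self))
    refine absurd ?_ hg_notMem
    have hgf : g * f ∈ F := by
      simpa [sub_mul] using sub_mem hf (hEF _ he f hf)
    have hgyg : g * (y * g) ∈ E ⊓ G := by
      refine ⟨?_, mul_mem_of_mem_rightIdeal hg _⟩
      simpa [sub_mul] using
        sub_mem (mul_mem_of_mem_rightIdeal hy g) (mul_mem_of_mem_rightIdeal he (y * g))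
    have hg_eq : g * f + ((1 - g) * g + g * (y * g) * s) = g := by
      calc _ = (1 - g) * g + g * (f + y * g * s) := by noncomm_ring
        _ = g := by rw [hs]; noncomm_ring
    exact Submodule.mem_sup.2 ⟨_, hgf, _, add_mem heg_mem (mul_mem_of_mem_rightIdeal hgyg s), hg_eq⟩

theorem le_sup_rspan_of_not_le (hEF : ∀ y ∈ E, ∀ f ∈ F, y * f ∈ F) (hEFG : E ⊓ F ≤ G)
    (hus : IsUniserialMod Rᵐᵒᵖ (R ⧸ F)) (he : e ∈ E) (hg : g ∈ G) (heg : e + g = 1)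
    (hFG : ¬F ≤ G) : G ≤ F ⊔ rspan g := by
  rcases hus.le_total_of_le (le_sup_left : F ≤ F ⊔ (E ⊓ G)) (le_sup_left : F ≤ F ⊔ rspan g)
    with h | h
  · intro x hx
    have hdecomp : e * x + g * x = x := by rw [← add_mul, heg, one_mul]
    have hex : e * x ∈ E ⊓ G :=
      ⟨mul_mem_of_mem_rightIdeal he x,
        eq_sub_of_add_eq hdecomp ▸ sub_mem hx (mul_mem_of_mem_rightIdeal hg x)⟩
    rw [← hdecomp]
    exact add_mem (h (Submodule.mem_sup_right hex)) (Submodule.mem_sup_right (mul_mem_rspan g x))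
  · exact absurd (h (Submodule.mem_sup_right mem_rspan_self))
      (notMem_sup_inf_of_not_le hEF hEFG he hg heg hFG)

theorem isTwoSidedRid_of_not_le (hEF : ∀ y ∈ E, ∀ f ∈ F, y * f ∈ F) (hEFG : E ⊓ F ≤ G)
    (hus : IsUniserialMod Rᵐᵒᵖ (R ⧸ F)) (hEG : E ⊔ G = ⊤) (hFG : ¬F ≤ G) : IsTwoSidedRid G := by
  obtain ⟨e, he, g, hg, heg⟩ := Submodule.mem_sup.1 (hEG.ge (Submodule.mem_top (x := (1 : R))))
  intro r x hx
  obtain ⟨f, hf, t, rfl⟩ := mem_sup_rspan.1 (le_sup_rspan_of_not_le hEF hEFG hus he hg heg hFG hx)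
  have hr : e * r ∈ E := mul_mem_of_mem_rightIdeal he r
  have hdecomp : r * (f + g * t) = e * r * f + e * r * g * t + g * (r * (f + g * t)) := by
    calc _ = (e + g) * (r * (f + g * t)) := by rw [heg, one_mul]
      _ = _ := by noncomm_ring
  rw [hdecomp]
  exact add_mem (add_mem (hEFG ⟨mul_mem_of_mem_rightIdeal hr f, hEF _ hr f hf⟩)
    (mul_mem_of_mem_rightIdeal (mul_mem_of_not_le hEF hEFG hus he hg heg hFG hr) t))
    (mul_mem_of_mem_rightIdeal hg _)

end Comaximal

section SerialFactorization

variable {n : ℕ} {F : Fin n → Submodule Rᵐᵒᵖ R}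

theorem exists_iInf_ne_sup_eq_top [Nonempty (Fin n)] (hco : Coindep F)
    {G : Submodule Rᵐᵒᵖ R} (hGus : IsUniserialMod Rᵐᵒᵖ (R ⧸ G)) :
    ∃ i, (⨅ j, ⨅ _ : j ≠ i, F j) ⊔ G = ⊤ := by
  have hdir : Directed (· ≤ ·) fun i => (⨅ j, ⨅ _ : j ≠ i, F j) ⊔ G := fun a b =>
    (hGus.le_total_of_le le_sup_right le_sup_right).elim (fun h => ⟨b, h, le_rfl⟩)
      fun h => ⟨a, le_rfl, h⟩
  obtain ⟨i, hi⟩ := hdir.finite_le id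
  exact ⟨i, eq_top_iff.2 ((iSup_iInf_ne_eq_top hco).ge.trans
    (iSup_le fun j => le_sup_left.trans (hi j)))⟩

theorem exists_sup_eq_top_and_le_or_isTwoSidedRid
    (hcomm : ∀ i j, rmul (F i) (F j) = rmul (F j) (F i)) (hco : Coindep F)
    (hus : ∀ i, IsUniserialMod Rᵐᵒᵖ (R ⧸ F i)) {G : Submodule Rᵐᵒᵖ R} (hGtop : G ≠ ⊤)
    (hGus : IsUniserialMod Rᵐᵒᵖ (R ⧸ G)) (hFG : ⨅ i, F i ≤ G) :
    ∃ i, (⨅ j, ⨅ _ : j ≠ i, F j) ⊔ G = ⊤ ∧ (F i ≤ G ∨ IsTwoSidedRid G) := by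
  have : Nonempty (Fin n) := by
    by_contra h
    rw [not_nonempty_iff] at h
    exact hGtop (top_le_iff.1 (by simpa [iInf_of_empty] using hFG))
  obtain ⟨i, hi⟩ := exists_iInf_ne_sup_eq_top hco hGus
  refine ⟨i, hi, or_iff_not_imp_left.2 fun hFG' => isTwoSidedRid_of_not_le ?_ ?_ (hus i) hi hFG'⟩
  · obtain ⟨k, hk⟩ : ∃ k, k ≠ i := by
      by_contra! h
      exact hFG' ((le_iInf fun j => (h j).symm ▸ le_rfl).trans hFG)
    intro y hy f hf
    exact rmul_le_right_of_comm (hcomm k i)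
      (mul_mem_rmul (iInf₂_le (f := fun j (_ : j ≠ i) => F j) k hk hy) hf)
  · rwa [inf_comm, ← iInf_split_single]

theorem hasSerialFact_iInf (hcomm : ∀ i j, rmul (F i) (F j) = rmul (F j) (F i))
    (hco : Coindep F) (hus : ∀ i, IsUniserialMod Rᵐᵒᵖ (R ⧸ F i)) :
    HasSerialFact (⨅ i, F i) := by
  classical
  let e := (Fintype.equivFin {i // F i ≠ ⊤}).symm
  have hcomm' : ∀ k l, rmul (F (e k)) (F (e l)) = rmul (F (e l)) (F (e k)) :=
    fun _ _ => hcomm _ _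
  have hco' := hco.comp_injective (Subtype.val_injective.comp e.injective)
  refine ⟨_, fun k => F (e k), fun k => (e k).2, hcomm', hco', fun k => hus _, ?_⟩
  rw [rprod_ofFn_eq_iInf hcomm' hco']
  refine le_antisymm (le_iInf fun k => iInf_le F _) (le_iInf fun i => ?_)
  by_cases hi : F i = ⊤
  · exact hi.symm ▸ le_top
  · simpa using iInf_le (fun k => F (e k)) (e.symm ⟨i, hi⟩)

theorem hasSerialFact_of_le {X B : Submodule Rᵐᵒᵖ R} (hus : IsUniserialMod Rᵐᵒᵖ (R ⧸ X))
    (h : X ≤ B) : HasSerialFact B := by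
  simpa using hasSerialFact_iInf (F := fun _ : Fin 1 => B) (fun _ _ => rfl)
    (fun i => by simp [Subsingleton.elim _ i]) fun _ => hus.quotient_of_le h

theorem hasSerialFact_of_isTwoSidedRid (hcomm : ∀ i j, rmul (F i) (F j) = rmul (F j) (F i))
    (hco : Coindep F) (hus : ∀ i, IsUniserialMod Rᵐᵒᵖ (R ⧸ F i)) {B : Submodule Rᵐᵒᵖ R}
    (hFB : ⨅ i, F i ≤ B) (hB : IsTwoSidedRid B) : HasSerialFact B := by
  have hcomm' : ∀ i j, rmul (B ⊔ F i) (B ⊔ F j) = rmul (B ⊔ F j) (B ⊔ F i) := by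
    intro i j
    rcases eq_or_ne i j with rfl | hij
    · rfl
    rw [rmul_sup_sup_eq hB (hco.sup_eq_top hij) (hcomm i j),
      rmul_sup_sup_eq hB (hco.sup_eq_top hij.symm) (hcomm j i), hcomm]
  have hco' : Coindep fun i => B ⊔ F i := hco.mono fun _ => le_sup_right
  convert hasSerialFact_iInf hcomm' hco' fun i => (hus i).quotient_of_le le_sup_right
  refine le_antisymm (le_iInf fun _ => le_sup_left) ?_
  calc ⨅ i, B ⊔ F i ≤ rprod ((List.ofFn F).map (B ⊔ ·)) := by
        rw [List.map_ofFn]; exact iInf_le_rprod_ofFn hcomm' hco'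
    _ ≤ B ⊔ rprod (List.ofFn F) := rprod_map_sup_le hB _
    _ = B := by rw [rprod_ofFn_eq_iInf hcomm hco, sup_eq_left.2 hFB]

theorem eq_of_le_of_le_of_coindep {m : ℕ} {G : Fin m → Submodule Rᵐᵒᵖ R} (hco : Coindep G)
    (hGtop : ∀ j, G j ≠ ⊤) {X : Submodule Rᵐᵒᵖ R} (hus : IsUniserialMod Rᵐᵒᵖ (R ⧸ X)) {j l : Fin m}
    (hj : X ≤ G j) (hl : X ≤ G l) : j = l := by
  by_contra hjl
  rcases hus.le_total_of_le hj hl with h | h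
  · exact hGtop l (by rw [← hco.sup_eq_top hjl, sup_eq_right.2 h])
  · exact hGtop j (by rw [← hco.sup_eq_top hjl, sup_eq_left.2 h])

theorem isTwoSidedRid_of_isSerialFact (hcomm : ∀ i j, rmul (F i) (F j) = rmul (F j) (F i))
    (hco : Coindep F) (hus : ∀ i, IsUniserialMod Rᵐᵒᵖ (R ⧸ F i)) {m : ℕ} {B : Submodule Rᵐᵒᵖ R}
    {G : Fin m → Submodule Rᵐᵒᵖ R} (hG : IsSerialFact B G) (hFB : ⨅ i, F i ≤ B)
    (hF : ∀ i, ¬F i ≤ B) : IsTwoSidedRid B := by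
  obtain ⟨hGtop, hGcomm, hGco, hGus, rfl⟩ := hG
  have hBG : rprod (List.ofFn G) = ⨅ j, G j := rprod_ofFn_eq_iInf hGcomm hGco
  choose idx hidx hcases using fun j => exists_sup_eq_top_and_le_or_isTwoSidedRid hcomm hco hus
    (hGtop j) (hGus j) (hFB.trans (rprod_ofFn_le hGcomm j))
  intro r x hx
  rw [hBG, Submodule.mem_iInf] at hx ⊢
  intro j
  rcases hcases j with hj | hj
  · obtain ⟨l, hl⟩ : ∃ l, ¬F (idx j) ≤ G l := by
      by_contra! h
      exact hF _ (hBG ▸ le_iInf h)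
    obtain ⟨e, he, g, hg, heg⟩ :=
      Submodule.mem_sup.1 ((hidx j).ge (Submodule.mem_top (x := (1 : R))))
    have hdecomp : e * r * x + g * (r * x) = r * x := by
      rw [mul_assoc, ← add_mul, heg, one_mul]
    rw [← hdecomp]
    refine add_mem ?_ (mul_mem_of_mem_rightIdeal hg _)
    have hxB : x ∈ rprod (List.ofFn G) := hBG ▸ (Submodule.mem_iInf G).2 hx
    refine mul_mem_of_mem_rprod_ofFn hGcomm (l := l) (fun h => hl (h ▸ hj))
      (fun k hk z hz => ?_) hxB
    rcases hcases k with hk' | hk'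
    · have hidx_ne : idx k ≠ idx j := fun h =>
        hk (eq_of_le_of_le_of_coindep hGco hGtop (hus (idx j)) (h ▸ hk') hj)
      have he' : e ∈ F (idx k) := iInf₂_le (f := fun i (_ : i ≠ idx j) => F i) _ hidx_ne he
      exact mul_mem_of_mem_rightIdeal (mul_mem_of_mem_rightIdeal (hk' he') r) z
    · exact hk' _ z hz
  · exact hj r x (hx j)

end SerialFactorization

theorem statement7_general {R : Type u} [Ring R] {n : ℕ}
    (A B : Submodule Rᵐᵒᵖ R) (F : Fin n → Submodule Rᵐᵒᵖ R)
    (hsf : IsSerialFact A F) (hAB : A ≤ B) :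
    HasSerialFact B ↔ (∃ i, F i ≤ B) ∨ IsTwoSidedRid B := by
  obtain ⟨-, hcomm, hco, hus, rfl⟩ := hsf
  rw [rprod_ofFn_eq_iInf hcomm hco] at hAB
  constructor
  · rintro ⟨m, G, hG⟩
    by_contra! h
    exact h.2 (isTwoSidedRid_of_isSerialFact hcomm hco hus hG hAB h.1)
  · rintro (⟨i, hi⟩ | hB)
    · exact hasSerialFact_of_le (hus i) hi
    · exact hasSerialFact_of_isTwoSidedRid hcomm hco hus hAB hB

/-- Theorem (Tuesday)(1): if `A = A₁⋯Aₙ` is a serial factorization and `A ⊆ B`, then `B`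
has a serial factorization iff `B ⊇ Aᵢ` for some `i` or `B` is a two-sided ideal. -/
theorem statement7 {R : Type u} [Ring R] [Nontrivial R] {n : ℕ}
    (A B : Submodule Rᵐᵒᵖ R) (F : Fin n → Submodule Rᵐᵒᵖ R)
    (hsf : IsSerialFact A F) (hAB : A ≤ B) :
    HasSerialFact B ↔ (∃ i, F i ≤ B) ∨ IsTwoSidedRid B :=
  statement7_general A B F hsf hAB
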